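/- For any x ≥ 0, √(1 − e^{−x²}) ≤ erf(x) ≤ √(1 − e^{−4x²/π}). -/

import Mathlib

/-!
Both bounds say that `D(x) = ± (erf x ^ 2 - (1 - e^{-a x²}))`, with `a = 1` resp. `a = 4/π`, is
nonnegative. `D` vanishes at `0` and at infinity, and `D'` is a positive multiple of a function
that is nonnegative on some `[0, t]` and nonpositive on `[t, ∞)`; so `D` rises, then falls, and
never drops below `0`. The sign pattern of `D'` is found the same way: a function vanishing at `0`
and negative near infinity inherits the pattern from its derivative. Two such steps for the lower
bound, three for the upper one, reach functions whose sign is evident.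
-/

/-- The Gauss error function `erf(x) = (2/√π) ∫₀ˣ e^{-t²} dt`. -/
noncomputable def erf (x : ℝ) : ℝ :=
  (2 / Real.sqrt Real.pi) * ∫ t in (0 : ℝ)..x, Real.exp (-t ^ 2)

open Real Set Filter Topology MeasureTheory

def NonnegThenNonpos (f : ℝ → ℝ) : Prop :=
  ∃ t, 0 ≤ t ∧ (∀ x ∈ Icc 0 t, 0 ≤ f x) ∧ ∀ x ∈ Ici t, f x ≤ 0

namespace NonnegThenNonpos

variable {f f' g : ℝ → ℝ}

lemma of_antitoneOn {t : ℝ} (hf : AntitoneOn f (Ici 0)) (ht : 0 ≤ t) (hft : f t = 0) :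
    NonnegThenNonpos f :=
  ⟨t, ht, fun _ hx => hft ▸ hf hx.1 ht hx.2, fun _ hx => hft ▸ hf ht (ht.trans hx) hx⟩

lemma mul_left (hf : NonnegThenNonpos f) (hg : ∀ x, 0 ≤ g x) :
    NonnegThenNonpos fun x => g x * f x := by
  obtain ⟨t, ht, hpos, hneg⟩ := hf
  exact ⟨t, ht, fun x hx => mul_nonneg (hg x) (hpos x hx),
    fun x hx => mul_nonpos_of_nonneg_of_nonpos (hg x) (hneg x hx)⟩

lemma comp_sq (hf : NonnegThenNonpos f) : NonnegThenNonpos fun x => f (x ^ 2) := by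
  obtain ⟨t, ht, hpos, hneg⟩ := hf
  exact ⟨√t, sqrt_nonneg t, fun x hx => hpos _ ⟨sq_nonneg x, (le_sqrt hx.1 ht).1 hx.2⟩,
    fun x hx => hneg _ ((sqrt_le_left ((sqrt_nonneg t).trans hx)).1 hx)⟩

lemma monotoneOn_antitoneOn_of_hasDerivAt (hd : ∀ x, HasDerivAt f (f' x) x) {t : ℝ}
    (hpos : ∀ x ∈ Icc 0 t, 0 ≤ f' x) (hneg : ∀ x ∈ Ici t, f' x ≤ 0) :
    MonotoneOn f (Icc 0 t) ∧ AntitoneOn f (Ici t) := by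
  have hc : Continuous f := continuous_iff_continuousAt.2 fun x => (hd x).continuousAt
  exact ⟨monotoneOn_of_hasDerivWithinAt_nonneg (convex_Icc 0 t) hc.continuousOn
      (fun x _ => (hd x).hasDerivWithinAt) fun x hx => hpos x (interior_subset hx),
    antitoneOn_of_hasDerivWithinAt_nonpos (convex_Ici t) hc.continuousOn
      (fun x _ => (hd x).hasDerivWithinAt) fun x hx => hneg x (interior_subset hx)⟩

lemma of_hasDerivAt (hd : ∀ x, HasDerivAt f (f' x) x) (hf' : NonnegThenNonpos f')
    (h0 : f 0 = 0) (hneg : ∀ᶠ x in atTop, f x < 0) : NonnegThenNonpos f := by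
  obtain ⟨s, hs, hpos', hneg'⟩ := hf'
  obtain ⟨hmono, hanti⟩ := monotoneOn_antitoneOn_of_hasDerivAt hd hpos' hneg'
  obtain ⟨p, hp, hsp⟩ := (hneg.and (eventually_ge_atTop s)).exists
  have hfs : 0 ≤ f s := h0 ▸ hmono (left_mem_Icc.2 hs) (right_mem_Icc.2 hs) hs
  obtain ⟨t, ht, hft⟩ := intermediate_value_Icc' hsp
    (fun x _ => (hd x).continuousAt.continuousWithinAt) ⟨hp.le, hfs⟩
  refine ⟨t, hs.trans ht.1, fun x hx => ?_, fun x hx => hft ▸ hanti ht.1 (ht.1.trans hx) hx⟩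
  rcases le_total x s with hxs | hsx
  · exact h0 ▸ hmono (left_mem_Icc.2 hs) ⟨hx.1, hxs⟩ hx.1
  · exact hft ▸ hanti hsx ht.1 hx.2

lemma nonneg_of_hasDerivAt (hd : ∀ x, HasDerivAt f (f' x) x) (hf' : NonnegThenNonpos f')
    (h0 : 0 ≤ f 0) (hlim : Tendsto f atTop (𝓝 0)) {x : ℝ} (hx : 0 ≤ x) : 0 ≤ f x := by
  obtain ⟨t, ht, hpos', hneg'⟩ := hf'
  obtain ⟨hmono, hanti⟩ := monotoneOn_antitoneOn_of_hasDerivAt hd hpos' hneg'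
  rcases le_total x t with hxt | htx
  · exact h0.trans (hmono (left_mem_Icc.2 ht) ⟨hx, hxt⟩ hx)
  · exact le_of_tendsto hlim (eventually_atTop.2 ⟨x, fun y hy => hanti htx (htx.trans hy) hy⟩)

end NonnegThenNonpos

lemma tendsto_mul_exp_neg_mul_sq_atTop {b : ℝ} (hb : 0 < b) :
    Tendsto (fun x => x * exp (-b * x ^ 2)) atTop (𝓝 0) := by
  refine ((tendsto_rpow_abs_mul_exp_neg_mul_sq_cocompact hb 1).mono_left
    atTop_le_cocompact).congr' ?_
  filter_upwards [eventually_ge_atTop 0] with x hx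
  rw [rpow_one, abs_of_nonneg hx]

lemma tendsto_exp_neg_mul_sq_atTop {b : ℝ} (hb : 0 < b) :
    Tendsto (fun x => exp (-b * x ^ 2)) atTop (𝓝 0) :=
  tendsto_exp_atBot.comp <| (tendsto_pow_atTop two_ne_zero).const_mul_atTop_of_neg (by linarith)

lemma one_lt_four_div_pi : 1 < 4 / π := by
  rw [one_lt_div pi_pos]
  exact pi_lt_four

lemma four_div_pi_lt : 4 / π < 4 / 3 :=
  div_lt_div_of_pos_left four_pos three_pos pi_gt_three

lemma sq_two_div_sqrt_pi : (2 / √π) ^ 2 = 4 / π := by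
  rw [div_pow, sq_sqrt pi_pos.le]
  norm_num

lemma hasDerivAt_erf (x : ℝ) : HasDerivAt erf (2 / √π * exp (-x ^ 2)) x := by
  have hc : Continuous fun t : ℝ => exp (-t ^ 2) := by fun_prop
  exact (intervalIntegral.integral_hasDerivAt_right (hc.intervalIntegrable 0 x)
    (hc.stronglyMeasurableAtFilter _ _) hc.continuousAt).const_mul (2 / √π)

lemma erf_zero : erf 0 = 0 := by simp [erf]

lemma erf_nonneg {x : ℝ} (hx : 0 ≤ x) : 0 ≤ erf x :=
  mul_nonneg (by positivity) (intervalIntegral.integral_nonneg hx fun t _ => (exp_pos _).le)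

lemma monotone_erf : Monotone erf :=
  monotone_of_deriv_nonneg (fun x => (hasDerivAt_erf x).differentiableAt) fun x => by
    rw [(hasDerivAt_erf x).deriv]
    positivity

lemma tendsto_erf_atTop : Tendsto erf atTop (𝓝 1) := by
  have hint : IntegrableOn (fun t : ℝ => exp (-t ^ 2)) (Ioi 0) := by
    simpa using (integrable_exp_neg_mul_sq one_pos).integrableOn
  have h := (intervalIntegral_tendsto_integral_Ioi 0 hint tendsto_id).const_mul (2 / √π)
  have hval : 2 / √π * ∫ t in Ioi (0 : ℝ), exp (-t ^ 2) = 1 := by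
    have hpi : √π ≠ 0 := (sqrt_pos.2 pi_pos).ne'
    have := integral_gaussian_Ioi 1
    simp only [neg_mul, one_mul, div_one] at this
    rw [this]
    field_simp
  rwa [hval] at h

lemma erf_le_one (x : ℝ) : erf x ≤ 1 := monotone_erf.ge_of_tendsto tendsto_erf_atTop x

lemma nonnegThenNonpos_mul_exp_neg_sub_one {a : ℝ} (ha : 1 ≤ a) :
    NonnegThenNonpos fun y => a * exp (-y) - 1 := by
  have ha0 : 0 < a := one_pos.trans_le ha
  refine .of_antitoneOn (fun y _ z _ hyz => ?_) (log_nonneg ha) ?_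
  · gcongr
  · rw [exp_neg, exp_log ha0, mul_inv_cancel₀ ha0.ne', sub_self]

lemma nonnegThenNonpos_mul_erf_sub : NonnegThenNonpos fun x => 2 / √π * erf x - x := by
  refine .of_hasDerivAt (fun x => ?_)
    (nonnegThenNonpos_mul_exp_neg_sub_one one_lt_four_div_pi.le).comp_sq
    (by simp [erf_zero]) ?_
  · refine (((hasDerivAt_erf x).const_mul (2 / √π)).sub (hasDerivAt_id x)).congr_deriv ?_
    rw [← sq_two_div_sqrt_pi]
    ring
  · filter_upwards [eventually_gt_atTop (2 / √π)] with x hx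
    have := mul_le_mul_of_nonneg_left (erf_le_one x) (by positivity : 0 ≤ 2 / √π)
    linarith

theorem sqrt_one_sub_exp_neg_sq_le_erf {x : ℝ} (hx : 0 ≤ x) :
    √(1 - exp (-x ^ 2)) ≤ erf x := by
  have hd (x : ℝ) : HasDerivAt (fun x => erf x ^ 2 - (1 - exp (-x ^ 2)))
      (2 * exp (-x ^ 2) * (2 / √π * erf x - x)) x := by
    refine (((hasDerivAt_erf x).pow 2).sub
      ((hasDerivAt_pow 2 x).neg.exp.const_sub 1)).congr_deriv ?_
    simp only [Pi.neg_apply]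
    ring
  have hlim : Tendsto (fun x => erf x ^ 2 - (1 - exp (-x ^ 2))) atTop (𝓝 0) := by
    simpa using (tendsto_erf_atTop.pow 2).sub
      ((tendsto_const_nhds (x := (1 : ℝ))).sub (tendsto_exp_neg_mul_sq_atTop one_pos))
  have := NonnegThenNonpos.nonneg_of_hasDerivAt hd
    (nonnegThenNonpos_mul_erf_sub.mul_left fun x => by positivity) (by simp [erf_zero]) hlim hx
  exact sqrt_le_iff.2 ⟨erf_nonneg hx, by linarith⟩

lemma nonnegThenNonpos_exp_mul_one_add_mul_sub_one {a : ℝ} (ha₁ : 1 < a) (ha₂ : a < 4 / 3) :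
    NonnegThenNonpos fun y => exp ((2 - a) * y) * (1 + 2 * (1 - a) * y) - 1 := by
  have hlin : NonnegThenNonpos fun y => 4 - 3 * a + 2 * (2 - a) * (1 - a) * y := by
    have hc : 0 < 2 * (2 - a) * (a - 1) := by nlinarith
    refine .of_antitoneOn (t := (4 - 3 * a) / (2 * (2 - a) * (a - 1)))
      (fun y _ z _ hyz => by nlinarith) (div_nonneg (by linarith) hc.le) ?_
    rw [show 2 * (2 - a) * (1 - a) = -(2 * (2 - a) * (a - 1)) by ring, neg_mul,
      mul_div_cancel₀ _ hc.ne']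
    ring
  refine .of_hasDerivAt (fun y => ?_) (hlin.mul_left fun y => (exp_pos ((2 - a) * y)).le)
    (by simp) ?_
  · refine ((((hasDerivAt_id y).const_mul (2 - a)).exp.mul
      (((hasDerivAt_id y).const_mul (2 * (1 - a))).const_add 1)).sub_const 1).congr_deriv ?_
    simp only [id]
    ring
  · filter_upwards [eventually_gt_atTop (1 / (2 * (a - 1)))] with y hy
    rw [div_lt_iff₀ (by linarith)] at hy
    nlinarith [exp_pos ((2 - a) * y)]

lemma nonnegThenNonpos_mul_exp_sub_erf :
    NonnegThenNonpos fun x => 4 / π * (x * exp (-(4 / π - 1) * x ^ 2)) - 2 / √π * erf x := by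
  have hv := nonnegThenNonpos_exp_mul_one_add_mul_sub_one one_lt_four_div_pi four_div_pi_lt
  refine .of_hasDerivAt (fun x => ?_)
    (hv.comp_sq.mul_left fun x => (by positivity : 0 ≤ 4 / π * exp (-x ^ 2)))
    (by simp [erf_zero]) ?_
  · refine ((((hasDerivAt_id x).mul ((hasDerivAt_pow 2 x).const_mul
      (-(4 / π - 1))).exp).const_mul (4 / π)).sub
      ((hasDerivAt_erf x).const_mul (2 / √π))).congr_deriv ?_
    have hexp : exp (-(4 / π - 1) * x ^ 2) = exp (-x ^ 2) * exp ((2 - 4 / π) * x ^ 2) := by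
      rw [← exp_add]
      ring_nf
    rw [hexp, ← sq_two_div_sqrt_pi]
    simp only [id]
    ring
  · have := ((tendsto_mul_exp_neg_mul_sq_atTop (sub_pos.2 one_lt_four_div_pi)).const_mul
      (4 / π)).sub (tendsto_erf_atTop.const_mul (2 / √π))
    refine this.eventually (gt_mem_nhds ?_)
    rw [mul_zero, mul_one, zero_sub, neg_lt_zero]
    positivity

theorem erf_le_sqrt_one_sub_exp_neg_mul_sq {x : ℝ} (hx : 0 ≤ x) :
    erf x ≤ √(1 - exp (-(4 / π) * x ^ 2)) := by
  have hd (x : ℝ) : HasDerivAt (fun x => 1 - exp (-(4 / π) * x ^ 2) - erf x ^ 2)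
      (2 * exp (-x ^ 2) * (4 / π * (x * exp (-(4 / π - 1) * x ^ 2)) - 2 / √π * erf x)) x := by
    refine ((((hasDerivAt_pow 2 x).const_mul (-(4 / π))).exp.const_sub 1).sub
      ((hasDerivAt_erf x).pow 2)).congr_deriv ?_
    have hexp : exp (-(4 / π) * x ^ 2) = exp (-x ^ 2) * exp (-(4 / π - 1) * x ^ 2) := by
      rw [← exp_add]
      ring_nf
    rw [hexp]
    ring
  have hlim : Tendsto (fun x => 1 - exp (-(4 / π) * x ^ 2) - erf x ^ 2) atTop (𝓝 0) := by
    simpa using ((tendsto_const_nhds (x := (1 : ℝ))).sub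
      (tendsto_exp_neg_mul_sq_atTop (by positivity : 0 < 4 / π))).sub (tendsto_erf_atTop.pow 2)
  have := NonnegThenNonpos.nonneg_of_hasDerivAt hd
    (nonnegThenNonpos_mul_exp_sub_erf.mul_left fun x => by positivity) (by simp [erf_zero])
    hlim hx
  exact le_sqrt_of_sq_le (by linarith)

/-- Chu's inequalities: for `x ≥ 0`,
    `√(1 - e^{-x²}) ≤ erf(x) ≤ √(1 - e^{-4x²/π})`. -/
theorem chu_inequalities (x : ℝ) (hx : 0 ≤ x) :
    Real.sqrt (1 - Real.exp (-x ^ 2)) ≤ erf x ∧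
      erf x ≤ Real.sqrt (1 - Real.exp (-(4 / Real.pi) * x ^ 2)) :=
  ⟨sqrt_one_sub_exp_neg_sq_le_erf hx, erf_le_sqrt_one_sub_exp_neg_mul_sq hx⟩
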